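/- arXiv:2507.02492 — 4 statements merged into one kernel-verified Lean document; each statement's English description precedes it below -/
import Mathlib

section
/- Let n ≥ 1, k ≥ 1, and let A_1, …, A_k be a system of k mutually unbiased orthonormal bases of ℂ^n with a_{iq}^{(l)} = b_{iq}^{(l)} + i·c_{iq}^{(l)} as above. Let M be the ideal of the real polynomial ring ℝ[x_{ij}, y_{ij} : 1 ≤ i, j ≤ n] generated by the polynomials Σ_{i=1}^n (x_{ij}x_{ik} + y_{ij}y_{ik}) and Σ_{i=1}^n (x_{ik}y_{ij} − x_{ij}y_{ik}) for 1 ≤ j ≠ k ≤ n, together with (Σ_{i=1}^n (x_{ij}b_{iq}^{(l)} + y_{ij}c_{iq}^{(l)}))^2 + (Σ_{i=1}^n (b_{iq}^{(l)}y_{ij} − x_{ij}c_{iq}^{(l)}))^2 − 1/n for 1 ≤ j, q ≤ n and 1 ≤ l ≤ k. If M is the unit ideal (equivalently 1 ∈ M), then there is no orthonormal basis A_{k+1} of ℂ^n making A_1, …, A_k, A_{k+1} a system of k+1 MUBs. -/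
open scoped BigOperators ComplexConjugate

/-- `A` is an orthonormal basis of `ℂ^n`, where `A j` is the `j`-th vector. -/
def IsONB (n : ℕ) (A : Fin n → Fin n → ℂ) : Prop :=
  ∀ j k : Fin n, (∑ i, A j i * conj (A k i)) = if j = k then 1 else 0

/-- Two orthonormal bases of `ℂ^n` are mutually unbiased. -/
def IsMUBPair (n : ℕ) (A B : Fin n → Fin n → ℂ) : Prop :=
  ∀ j k : Fin n, ‖∑ i, A j i * conj (B k i)‖ = 1 / Real.sqrt n

/-- The polynomial ring `ℝ[x_{ij}, y_{ij} : 1 ≤ i, j ≤ n]`: the left summand indexes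
the `x` variables and the right summand the `y` variables. -/
abbrev MUBPolyRing (n : ℕ) := MvPolynomial ((Fin n × Fin n) ⊕ (Fin n × Fin n)) ℝ

noncomputable def Xv {n : ℕ} (i j : Fin n) : MUBPolyRing n :=
  MvPolynomial.X (Sum.inl (i, j))

noncomputable def Yv {n : ℕ} (i j : Fin n) : MUBPolyRing n :=
  MvPolynomial.X (Sum.inr (i, j))

/-- The generators of the ideal `M` determining the extendability of a system of MUBs. -/
def MUBIdealGens (n k : ℕ) (b c : Fin k → Fin n → Fin n → ℝ) : Set (MUBPolyRing n) :=
  {p | (∃ j k' : Fin n, j ≠ k' ∧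
          p = ∑ i, (Xv i j * Xv i k' + Yv i j * Yv i k')) ∨
       (∃ j k' : Fin n, j ≠ k' ∧
          p = ∑ i, (Xv i k' * Yv i j - Xv i j * Yv i k')) ∨
       (∃ (l : Fin k) (j q : Fin n),
          p = (∑ i, (Xv i j * MvPolynomial.C (b l i q) + Yv i j * MvPolynomial.C (c l i q))) ^ 2
              + (∑ i, (MvPolynomial.C (b l i q) * Yv i j - Xv i j * MvPolynomial.C (c l i q))) ^ 2
              - MvPolynomial.C ((1 : ℝ) / n))}

/-!
A new basis `A'` extending the system gives a real point, the real and imaginary parts of its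
coordinates, at which every generator of `M` vanishes: the first two families are the real and
imaginary parts of `⟨A'_j, A'_k⟩ = 0`, the third is `|⟨A_{l,q}, A'_j⟩|² - 1/n = 0`. Evaluation at
that point is a ring homomorphism `ℝ[x, y] → ℝ` killing `M`, so `M` cannot contain `1`.
-/

open MvPolynomial

variable {n : ℕ}

/-- `x_{ij} + i y_{ij}` is read as the `i`-th coordinate of the `j`-th vector `B j`. -/
def coordPoint (B : Fin n → Fin n → ℂ) : (Fin n × Fin n) ⊕ (Fin n × Fin n) → ℝ :=
  Sum.elim (fun p => (B p.2 p.1).re) (fun p => (B p.2 p.1).im)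

section coordPoint

variable (B : Fin n → Fin n → ℂ)

@[simp]
lemma aeval_coordPoint_Xv (i j : Fin n) : aeval (coordPoint B) (Xv i j) = (B j i).re := by
  simp [Xv, coordPoint]

@[simp]
lemma aeval_coordPoint_Yv (i j : Fin n) : aeval (coordPoint B) (Yv i j) = (B j i).im := by
  simp [Yv, coordPoint]

lemma aeval_coordPoint_eq_re_inner (j k : Fin n) :
    aeval (coordPoint B) (∑ i, (Xv i j * Xv i k + Yv i j * Yv i k)) =
      (∑ i, B j i * conj (B k i)).re := by
  simp only [map_sum, map_add, map_mul, aeval_coordPoint_Xv, aeval_coordPoint_Yv,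
    Complex.re_sum, Complex.mul_re, Complex.conj_re, Complex.conj_im]
  congr 1 with i
  ring

lemma aeval_coordPoint_eq_im_inner (j k : Fin n) :
    aeval (coordPoint B) (∑ i, (Xv i k * Yv i j - Xv i j * Yv i k)) =
      (∑ i, B j i * conj (B k i)).im := by
  simp only [map_sum, map_sub, map_mul, aeval_coordPoint_Xv, aeval_coordPoint_Yv,
    Complex.im_sum, Complex.mul_im, Complex.conj_re, Complex.conj_im]
  congr 1 with i
  ring

lemma aeval_coordPoint_eq_sq_norm_inner (a : Fin n → ℂ) (b c : Fin n → ℝ)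
    (ha : ∀ i, a i = b i + Complex.I * c i) (j : Fin n) :
    aeval (coordPoint B)
        ((∑ i, (Xv i j * C (b i) + Yv i j * C (c i))) ^ 2 +
          (∑ i, (C (b i) * Yv i j - Xv i j * C (c i))) ^ 2) =
      ‖∑ i, a i * conj (B j i)‖ ^ 2 := by
  set z := ∑ i, a i * conj (B j i)
  have hre : z.re = ∑ i, ((B j i).re * b i + (B j i).im * c i) := by
    simp only [z, Complex.re_sum, ha, Complex.mul_re, Complex.conj_re, Complex.conj_im,
      Complex.add_re, Complex.add_im, Complex.mul_im, Complex.ofReal_re, Complex.ofReal_im,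
      Complex.I_re, Complex.I_im]
    congr 1 with i
    ring
  have him : z.im = -∑ i, (b i * (B j i).im - (B j i).re * c i) := by
    simp only [z, Complex.im_sum, ← Finset.sum_neg_distrib, ha, Complex.mul_im,
      Complex.conj_re, Complex.conj_im, Complex.add_re, Complex.add_im, Complex.mul_re,
      Complex.ofReal_re, Complex.ofReal_im, Complex.I_re, Complex.I_im]
    congr 1 with i
    ring
  simp only [map_add, map_pow, map_sum, map_sub, map_mul, aeval_coordPoint_Xv,
    aeval_coordPoint_Yv, aeval_C, Algebra.algebraMap_self, RingHom.id_apply]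
  rw [Complex.sq_norm, Complex.normSq_apply, hre, him]
  ring

end coordPoint

lemma aeval_coordPoint_eq_zero_of_mem_MUBIdealGens {k : ℕ} {A : Fin k → Fin n → Fin n → ℂ}
    {b c : Fin k → Fin n → Fin n → ℝ}
    (hA : ∀ (l : Fin k) (q i : Fin n), A l q i = (b l i q : ℂ) + Complex.I * (c l i q : ℂ))
    {A' : Fin n → Fin n → ℂ} (hONB : IsONB n A') (hMUB : ∀ l, IsMUBPair n (A l) A') :
    ∀ p ∈ MUBIdealGens n k b c, aeval (coordPoint A') p = 0 := by
  rintro p (⟨j, k', hjk, rfl⟩ | ⟨j, k', hjk, rfl⟩ | ⟨l, j, q, rfl⟩)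
  · rw [aeval_coordPoint_eq_re_inner, hONB j k', if_neg hjk, Complex.zero_re]
  · rw [aeval_coordPoint_eq_im_inner, hONB j k', if_neg hjk, Complex.zero_im]
  · rw [map_sub, aeval_coordPoint_eq_sq_norm_inner A' (A l q) _ _ (hA l q), hMUB l q j,
      aeval_C, div_pow, Real.sq_sqrt n.cast_nonneg]
    simp

theorem not_extendable_of_unit_ideal_general (n k : ℕ)
    (A : Fin k → Fin n → Fin n → ℂ)
    (b c : Fin k → Fin n → Fin n → ℝ)
    (hA : ∀ (l : Fin k) (q i : Fin n),
      A l q i = (b l i q : ℂ) + Complex.I * (c l i q : ℂ))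
    (hunit : Ideal.span (MUBIdealGens n k b c) = ⊤) :
    ¬ ∃ A' : Fin n → Fin n → ℂ, IsONB n A' ∧ ∀ l, IsMUBPair n (A l) A' := by
  rintro ⟨A', hONB', hMUB'⟩
  have hker : Ideal.span (MUBIdealGens n k b c) ≤ RingHom.ker (aeval (coordPoint A')) :=
    Ideal.span_le.mpr (aeval_coordPoint_eq_zero_of_mem_MUBIdealGens hA hONB' hMUB')
  exact RingHom.ker_ne_top _ (top_unique (hunit ▸ hker))

theorem not_extendable_of_unit_ideal (n k : ℕ) (hn : 1 ≤ n) (hk : 1 ≤ k)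
    (A : Fin k → Fin n → Fin n → ℂ)
    (b c : Fin k → Fin n → Fin n → ℝ)
    (hA : ∀ (l : Fin k) (q i : Fin n),
      A l q i = (b l i q : ℂ) + Complex.I * (c l i q : ℂ))
    (hONB : ∀ l, IsONB n (A l))
    (hMUB : ∀ l l', l ≠ l' → IsMUBPair n (A l) (A l'))
    (hunit : Ideal.span (MUBIdealGens n k b c) = ⊤) :
    ¬ ∃ A' : Fin n → Fin n → ℂ, IsONB n A' ∧ ∀ l, IsMUBPair n (A l) A' :=
  not_extendable_of_unit_ideal_general n k A b c hA hunit
end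

section
/- Let E = {(1,0), (0,1)} be the standard basis of ℂ², B_1 = {(1/√2)(1,1), (1/√2)(1,−1)}, and B_2 = {(1/√2)(1,i), (1/√2)(1,−i)}, so that {E, B_1, B_2} is a system of 3 MUBs in ℂ². Then there is no orthonormal basis B_3 of ℂ² that is mutually unbiased with each of E, B_1 and B_2; i.e., this system cannot be extended to a system of 4 MUBs. -/
open scoped BigOperators ComplexConjugate

/-- The standard basis of `ℂ²`. -/
def stdBasis : Fin 2 → Fin 2 → ℂ := fun j i => if i = j then 1 else 0

/-- The basis `B₁ = {(1/√2)(1,1), (1/√2)(1,−1)}` of `ℂ²`. -/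
noncomputable def B1 : Fin 2 → Fin 2 → ℂ :=
  ![![(Real.sqrt 2 : ℂ)⁻¹, (Real.sqrt 2 : ℂ)⁻¹],
    ![(Real.sqrt 2 : ℂ)⁻¹, -(Real.sqrt 2 : ℂ)⁻¹]]

/-- The basis `B₂ = {(1/√2)(1,i), (1/√2)(1,−i)}` of `ℂ²`. -/
noncomputable def B2 : Fin 2 → Fin 2 → ℂ :=
  ![![(Real.sqrt 2 : ℂ)⁻¹, (Real.sqrt 2 : ℂ)⁻¹ * Complex.I],
    ![(Real.sqrt 2 : ℂ)⁻¹, -((Real.sqrt 2 : ℂ)⁻¹ * Complex.I)]]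

/-!
Write `x, y` for the conjugated coordinates of the first vector of a fourth basis. Unbiasedness
with the standard basis gives `|x|² = |y|² = 1/2`; unbiasedness with the first vectors of `B₁`
and `B₂` gives `|x + y|² = |x + i y|² = 1 = |x|² + |y|²`, i.e. both the real and the imaginary
part of `x ȳ` vanish. So `x ȳ = 0`, contradicting `|x ȳ|² = 1/4`.
-/

open Complex

theorem IsMUBPair.normSq_sum_mul_conj {n : ℕ} {A B : Fin n → Fin n → ℂ} (h : IsMUBPair n A B)
    (j k : Fin n) : normSq (∑ i, A j i * conj (B k i)) = 1 / n := by
  rw [normSq_eq_norm_sq, h j k, div_pow, one_pow, Real.sq_sqrt (Nat.cast_nonneg n)]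

theorem normSq_inv_sqrt_two_mul (z : ℂ) : normSq ((Real.sqrt 2 : ℂ)⁻¹ * z) = normSq z / 2 := by
  rw [normSq_mul, normSq_inv, normSq_ofReal, Real.mul_self_sqrt zero_le_two, inv_mul_eq_div]

theorem normSq_add_I_mul (x y : ℂ) :
    normSq (x + I * y) = normSq x + normSq y + 2 * (x * conj y).im := by
  rw [normSq_add, normSq_mul, normSq_I, one_mul, map_mul, conj_I]
  simp only [mul_re, mul_im, neg_re, neg_im, I_re, I_im]
  ring

theorem mul_conj_eq_zero_of_normSq_add {x y : ℂ}
    (hre : normSq (x + y) = normSq x + normSq y)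
    (him : normSq (x + I * y) = normSq x + normSq y) : x * conj y = 0 := by
  rw [normSq_add] at hre
  rw [normSq_add_I_mul] at him
  apply Complex.ext <;> simp only [zero_re, zero_im] <;> linarith

theorem no_fourth_MUB_in_dim_two :
    ¬ ∃ b : Fin 2 → Fin 2 → ℂ, IsONB 2 b ∧
      IsMUBPair 2 stdBasis b ∧ IsMUBPair 2 B1 b ∧ IsMUBPair 2 B2 b := by
  rintro ⟨b, -, hE, h1, h2⟩
  have hx : normSq (conj (b 0 0)) = 1 / 2 := by
    simpa [stdBasis] using hE.normSq_sum_mul_conj 0 0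
  have hy : normSq (conj (b 0 1)) = 1 / 2 := by
    simpa [stdBasis] using hE.normSq_sum_mul_conj 1 0
  have hxy : normSq (conj (b 0 0) + conj (b 0 1)) = 1 := by
    have h := h1.normSq_sum_mul_conj 0 0
    simp only [Fin.sum_univ_two, B1, Matrix.cons_val_zero, Matrix.cons_val_one, ← mul_add,
      normSq_inv_sqrt_two_mul] at h
    norm_num at h
    linarith
  have hxIy : normSq (conj (b 0 0) + I * conj (b 0 1)) = 1 := by
    have h := h2.normSq_sum_mul_conj 0 0
    simp only [Fin.sum_univ_two, B2, Matrix.cons_val_zero, Matrix.cons_val_one, mul_assoc,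
      ← mul_add, normSq_inv_sqrt_two_mul] at h
    norm_num at h
    linarith
  have horth := congrArg normSq <| mul_conj_eq_zero_of_normSq_add
    (x := conj (b 0 0)) (y := conj (b 0 1)) (by linarith) (by linarith)
  rw [normSq_mul, normSq_conj (conj (b 0 1)), hx, hy, map_zero] at horth
  norm_num at horth
end

section
/- Let A_1, …, A_m be nonzero n×n complex matrices such that each A_i is normal, A_i A_j = A_j A_i for all i, j, and tr(A_i† A_j) = 0 for all i ≠ j (pairwise orthogonal with respect to the trace inner product). Then m ≤ n. -/
/-!
Commuting normal matrices are simultaneously diagonalizable, so `ℂⁿ` is the direct sum of the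
nonzero joint eigenspaces `W χ = ⋂ᵢ ker (Aᵢ - χᵢ)`, of which there are at most `n`. A relation
`∑ gᵢ χᵢ = 0` holding for every such `χ` makes `∑ gᵢ Aᵢ` vanish on all of them, hence vanish;
so linear independence of the `Aᵢ` (which follows from orthogonality) makes the functionals
`χ ↦ χᵢ` linearly independent on a set of at most `n` points, and `m ≤ n`.
Diagonalizability of a normal matrix `N` comes from `ker N² = ker N`, which follows from
`ker (Nᴴ N) = ker N`.
-/

open LinearMap
open scoped ComplexOrder

namespace Module.End

variable {K V ι : Type*} [Field K] [AddCommGroup V] [Module K V]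

theorem maxGenEigenspace_eq_eigenspace_of_ker_sq_le {f : End K V} {μ : K}
    (h : ker ((f - μ • 1) ^ 2) ≤ ker (f - μ • 1)) :
    f.maxGenEigenspace μ = f.eigenspace μ := by
  refine le_antisymm (fun v hv ↦ ?_) eigenspace_le_maxGenEigenspace
  obtain ⟨k, hk⟩ := (mem_maxGenEigenspace f μ v).mp hv
  have hstable : ker ((f - μ • 1) ^ 1) = ker ((f - μ • 1) ^ (1 + 1)) :=
    le_antisymm (by rw [pow_two, pow_one, mul_eq_comp]; exact ker_le_ker_comp _ _)
      (by simpa using h)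
  have hk' : v ∈ ker ((f - μ • 1) ^ (1 + k)) := by
    rw [add_comm, pow_succ', mul_eq_comp]
    exact ker_le_ker_comp _ _ hk
  rwa [eigenspace_def, ← pow_one (f - μ • 1), ker_pow_constant hstable k]

theorem sum_smul_apply_of_mem_iInf_eigenspace [Fintype ι] {T : ι → End K V} (g : ι → K)
    {χ : ι → K} {v : V} (hv : v ∈ ⨅ i, (T i).eigenspace (χ i)) :
    (∑ i, g i • T i) v = (∑ i, g i * χ i) • v := by
  rw [Submodule.mem_iInf] at hv
  simp [Finset.sum_smul, mem_eigenspace_iff.mp (hv _), smul_smul]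

theorem card_le_finrank_of_linearIndependent_of_commute [IsAlgClosed K] [FiniteDimensional K V]
    [Fintype ι] {T : ι → End K V} (hT : LinearIndependent K T)
    (hcomm : Pairwise fun i j ↦ Commute (T i) (T j))
    (hdiag : ∀ i μ, (T i).maxGenEigenspace μ = (T i).eigenspace μ) :
    Fintype.card ι ≤ Module.finrank K V := by
  classical
  set W : (ι → K) → Submodule K V := fun χ ↦ ⨅ i, (T i).eigenspace (χ i)
  have hW_top : ⨆ χ, W χ = ⊤ := by
    simpa only [hdiag] using
      iSup_iInf_maxGenEigenspace_eq_top_of_iSup_maxGenEigenspace_eq_top_of_commute T hcomm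
        fun i ↦ iSup_maxGenEigenspace_eq_top (T i)
  have hW_indep : iSupIndep W := by
    simpa only [hdiag] using independent_iInf_maxGenEigenspace_of_forall_mapsTo T
      fun i j ↦ mapsTo_maxGenEigenspace_of_comm <|
        (eq_or_ne j i).elim (fun h ↦ h ▸ Commute.refl _) (hcomm ·)
  have := hW_indep.fintypeNeBotOfFiniteDimensional
  let L : ι → {χ // W χ ≠ ⊥} → K := fun i χ ↦ χ.1 i
  have hL : LinearIndependent K L := by
    refine Fintype.linearIndependent_iff.mpr fun g hg ↦ Fintype.linearIndependent_iff.mp hT g ?_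
    rw [← ker_eq_top, eq_top_iff, ← hW_top]
    refine iSup_le fun χ ↦ ?_
    by_cases hχ : W χ = ⊥
    · simp [hχ]
    intro v hv
    have hχ0 : ∑ i, g i * χ i = 0 := by simpa [L] using congr_fun hg ⟨χ, hχ⟩
    rw [mem_ker, sum_smul_apply_of_mem_iInf_eigenspace g hv, hχ0, zero_smul]
  calc Fintype.card ι ≤ Module.finrank K ({χ // W χ ≠ ⊥} → K) := hL.fintype_card_le_finrank
    _ = Fintype.card {χ // W χ ≠ ⊥} := Module.finrank_fintype_fun_eq_card K
    _ ≤ Module.finrank K V := hW_indep.subtype_ne_bot_le_finrank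

end Module.End

namespace Matrix

variable {ι m n R : Type*} [Fintype m] [Fintype n] [Field R] [PartialOrder R] [StarRing R]
  [StarOrderedRing R]

theorem linearIndependent_of_trace_conjTranspose_mul_eq_zero {A : ι → Matrix m n R}
    (hne : ∀ i, A i ≠ 0) (horth : Pairwise fun i j ↦ ((A i)ᴴ * A j).trace = 0) :
    LinearIndependent R A := by
  refine linearIndependent_iff'.mpr fun s g hg i hi ↦ ?_
  have key : ((A i)ᴴ * ∑ j ∈ s, g j • A j).trace = g i * ((A i)ᴴ * A i).trace := by
    rw [Matrix.mul_sum, trace_sum, Finset.sum_eq_single_of_mem i hi fun j _ hji ↦ by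
      rw [Matrix.mul_smul, trace_smul, horth hji.symm, smul_zero]]
    rw [Matrix.mul_smul, trace_smul, smul_eq_mul]
  rw [hg, Matrix.mul_zero, trace_zero] at key
  exact (mul_eq_zero.mp key.symm).resolve_right
    (trace_conjTranspose_mul_self_eq_zero_iff.not.mpr (hne i))

theorem mulVec_mulVec_eq_zero_iff_of_isStarNormal {A : Matrix n n R} (hA : IsStarNormal A)
    (v : n → R) : A *ᵥ (A *ᵥ v) = 0 ↔ A *ᵥ v = 0 := by
  refine ⟨fun h ↦ ?_, fun h ↦ by rw [h, mulVec_zero]⟩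
  have h₁ : (A * Aᴴ) *ᵥ (A *ᵥ v) = 0 := by
    rw [← star_eq_conjTranspose, ← hA.star_comm_self.eq, star_eq_conjTranspose,
      conjTranspose_mul_self_mulVec_eq_zero, h]
  rw [self_mul_conjTranspose_mulVec_eq_zero, mulVec_mulVec] at h₁
  exact (conjTranspose_mul_self_mulVec_eq_zero A v).mp h₁

theorem maxGenEigenspace_toLin'_eq_eigenspace_of_isStarNormal [DecidableEq n]
    {A : Matrix n n R} (hA : IsStarNormal A) (μ : R) :
    Module.End.maxGenEigenspace (toLin' A) μ = Module.End.eigenspace (toLin' A) μ := by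
  have hB : IsStarNormal (A - μ • 1) := by
    refine Commute.isStarNormal_sub ?_
    rw [star_smul, star_one]
    exact (Commute.one_right A).smul_right _
  refine Module.End.maxGenEigenspace_eq_eigenspace_of_ker_sq_le fun v hv ↦ ?_
  have hshift : toLin' A - μ • 1 = toLin' (A - μ • 1) := by
    rw [map_sub, map_smul, toLin'_one]; rfl
  rw [hshift, LinearMap.mem_ker, pow_two, Module.End.mul_apply, toLin'_apply, toLin'_apply] at hv
  rw [hshift, LinearMap.mem_ker, toLin'_apply]
  exact (mulVec_mulVec_eq_zero_iff_of_isStarNormal hB v).mp hv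

end Matrix

theorem max_orthogonal_commuting_normal (n m : ℕ)
    (A : Fin m → Matrix (Fin n) (Fin n) ℂ)
    (hne : ∀ i, A i ≠ 0)
    (hnormal : ∀ i, A i * (A i).conjTranspose = (A i).conjTranspose * A i)
    (hcomm : ∀ i j, A i * A j = A j * A i)
    (horth : ∀ i j, i ≠ j → ((A i).conjTranspose * A j).trace = 0) :
    m ≤ n := by
  have hA : LinearIndependent ℂ A :=
    Matrix.linearIndependent_of_trace_conjTranspose_mul_eq_zero hne fun i j ↦ horth i j
  have hT : LinearIndependent ℂ fun i ↦ Matrix.toLin' (A i) := hA.map' _ (LinearEquiv.ker _)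
  have hTcomm : Pairwise fun i j ↦ Commute (Matrix.toLin' (A i)) (Matrix.toLin' (A j)) :=
    fun i j _ ↦ Commute.map (hcomm i j) Matrix.toLinAlgEquiv'
  simpa using Module.End.card_le_finrank_of_linearIndependent_of_commute hT hTcomm fun i ↦
    Matrix.maxGenEigenspace_toLin'_eq_eigenspace_of_isStarNormal ⟨(hnormal i).symm⟩
end

section
/- Let n ≥ 1 and m ≥ 1, let B_1, …, B_m be orthonormal bases of ℂ^n that are pairwise mutually unbiased, with B_j = {ψ_1^j, …, ψ_n^j}, and let v_1, …, v_n be an orthonormal basis of ℂ^n with v_1 = (1/√n)·(1, …, 1), writing v_t = (v_{t1}, …, v_{tn}). For 1 ≤ j ≤ m and 1 ≤ t ≤ n define the n×n matrix U_{jt} = Σ_{i=1}^n v_{ti} · ψ_i^j (ψ_i^j)†, where ψ(ψ)† denotes the rank-one matrix with entries ψ_a·conj(ψ_b). Then: (1) each U_{jt} is normal; (2) for each fixed j, U_{js} U_{jt} = U_{jt} U_{js} for all s, t; (3) U_{j1} = (1/√n)·I_n for every j; and (4) tr(U_{js}† U_{kt}) = 0 whenever (j, s) ≠ (k, t) and not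 both s = 1 and t = 1. -/
open scoped BigOperators ComplexConjugate

/-!
Each `U_{jt}` is the matrix that is diagonal in the basis `B_j` with eigenvalues `v_t`.
Matrices diagonal in a common orthonormal basis commute and multiply eigenvalue-wise, which
gives normality, commutativity, `U_{j1} = n^{-1/2} I`, and `tr(U_{js}† U_{jt}) = ⟨v_t, v_s⟩`.
For `j ≠ k`, unbiasedness makes the trace of a product of two rank-one projections, one from
each basis, equal to `1/n`, so `tr(U_{js}† U_{kt}) = conj(∑ v_s) (∑ v_t) / n`; this vanishes
because a `v_t` orthogonal to the constant vector `v_1` has coordinate sum zero.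
-/

open Matrix

lemma trace_vecMulVec_star_mul_vecMulVec_star {ι : Type*} [Fintype ι] (x y : ι → ℂ) :
    (vecMulVec x (star x) * vecMulVec y (star y)).trace = (‖x ⬝ᵥ star y‖ ^ 2 : ℝ) := by
  rw [vecMulVec_mul_vecMulVec, trace_vecMulVec, dotProduct_smul, smul_eq_mul, star_dotProduct,
    dotProduct_comm (star y)]
  push_cast
  exact Complex.conj_mul' _

section DiagonalInBasis

variable {n : ℕ}

/-- When `A` is orthonormal, the matrix with eigenvectors `A i` and eigenvalues `c i`;
the paper's `U_{jt}` is `diagonalInBasis (B j) (v t)`. -/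
def diagonalInBasis (A : Fin n → Fin n → ℂ) (c : Fin n → ℂ) : Matrix (Fin n) (Fin n) ℂ :=
  ∑ i, c i • vecMulVec (A i) (star (A i))

lemma star_dotProduct_of_isONB {A : Fin n → Fin n → ℂ} (hA : IsONB n A) (i k : Fin n) :
    star (A i) ⬝ᵥ A k = if i = k then 1 else 0 := by
  rw [dotProduct_comm]
  simpa [dotProduct, eq_comm] using hA k i

lemma conjTranspose_diagonalInBasis (A : Fin n → Fin n → ℂ) (c : Fin n → ℂ) :
    (diagonalInBasis A c)ᴴ = diagonalInBasis A (star c) := by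
  simp [diagonalInBasis, conjTranspose_sum]

lemma vecMulVec_star_mul_vecMulVec_star_of_isONB {A : Fin n → Fin n → ℂ} (hA : IsONB n A)
    (i k : Fin n) :
    vecMulVec (A i) (star (A i)) * vecMulVec (A k) (star (A k)) =
      if i = k then vecMulVec (A i) (star (A i)) else 0 := by
  rw [vecMulVec_mul_vecMulVec, star_dotProduct_of_isONB hA]
  split_ifs with h <;> simp [h]

lemma diagonalInBasis_mul {A : Fin n → Fin n → ℂ} (hA : IsONB n A) (c d : Fin n → ℂ) :
    diagonalInBasis A c * diagonalInBasis A d = diagonalInBasis A (c * d) := by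
  simp only [diagonalInBasis, Finset.sum_mul, Finset.mul_sum, smul_mul_smul,
    vecMulVec_star_mul_vecMulVec_star_of_isONB hA, smul_ite, smul_zero, Finset.sum_ite_eq',
    Finset.mem_univ, if_true, Pi.mul_apply]

lemma commute_diagonalInBasis {A : Fin n → Fin n → ℂ} (hA : IsONB n A) (c d : Fin n → ℂ) :
    Commute (diagonalInBasis A c) (diagonalInBasis A d) := by
  rw [Commute, SemiconjBy, diagonalInBasis_mul hA, diagonalInBasis_mul hA, mul_comm]

/-- Completeness: a square matrix with orthonormal rows also has orthonormal columns. -/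
lemma sum_vecMulVec_star_of_isONB {A : Fin n → Fin n → ℂ} (hA : IsONB n A) :
    ∑ i, vecMulVec (A i) (star (A i)) = 1 := by
  have hrows : of A * (of A)ᴴ = 1 := by
    ext j k
    simpa [mul_apply, one_apply] using hA j k
  have hcols := mul_eq_one_comm.mp hrows
  ext a b
  simpa [mul_apply, one_apply, eq_comm, mul_comm, Matrix.sum_apply, vecMulVec_apply] using
    congrFun (congrFun hcols b) a

lemma diagonalInBasis_const {A : Fin n → Fin n → ℂ} (hA : IsONB n A) (z : ℂ) :
    diagonalInBasis A (fun _ => z) = z • 1 := by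
  rw [diagonalInBasis, ← Finset.smul_sum, sum_vecMulVec_star_of_isONB hA]

lemma trace_diagonalInBasis {A : Fin n → Fin n → ℂ} (hA : IsONB n A) (c : Fin n → ℂ) :
    (diagonalInBasis A c).trace = ∑ i, c i := by
  simp [diagonalInBasis, trace_sum, dotProduct_comm (A _), star_dotProduct_of_isONB hA]

lemma trace_diagonalInBasis_mul_of_isMUBPair {A C : Fin n → Fin n → ℂ} (hAC : IsMUBPair n A C)
    (c d : Fin n → ℂ) :
    (diagonalInBasis A c * diagonalInBasis C d).trace = (∑ i, c i) * (∑ k, d k) / n := by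
  have hproj (i k : Fin n) :
      (vecMulVec (A i) (star (A i)) * vecMulVec (C k) (star (C k))).trace = (n : ℂ)⁻¹ := by
    simp only [trace_vecMulVec_star_mul_vecMulVec_star, dotProduct, Pi.star_apply,
      Complex.star_def, hAC i k, div_pow, one_pow, Real.sq_sqrt n.cast_nonneg]
    push_cast
    ring
  simp only [diagonalInBasis, Finset.sum_mul, Finset.mul_sum, smul_mul_smul, trace_sum, trace_smul,
    hproj, smul_eq_mul, div_eq_mul_inv]

end DiagonalInBasis

lemma sum_eq_zero_of_sum_mul_conj_eq_zero {ι : Type*} [Fintype ι] {x : ι → ℂ} {z : ℂ}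
    (hz : z ≠ 0) (h : ∑ i, x i * conj z = 0) : ∑ i, x i = 0 := by
  rw [← Finset.sum_mul, mul_eq_zero, map_eq_zero] at h
  exact h.resolve_right hz

theorem commuting_classes_from_MUBs_general (n m : ℕ) (hn : 0 < n)
    (B : Fin m → Fin n → Fin n → ℂ)
    (hONB : ∀ j, IsONB n (B j))
    (hMUB : ∀ j k, j ≠ k → IsMUBPair n (B j) (B k))
    (v : Fin n → Fin n → ℂ)
    (hv : ∀ t s : Fin n, (∑ i, v t i * conj (v s i)) = if t = s then 1 else 0)
    (hv1 : ∀ i, v ⟨0, hn⟩ i = ((Real.sqrt n)⁻¹ : ℂ))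
    (U : Fin m → Fin n → Matrix (Fin n) (Fin n) ℂ)
    (hU : ∀ j t, U j t = ∑ i, v t i • Matrix.of (fun a b => B j i a * conj (B j i b))) :
    (∀ j t, U j t * (U j t).conjTranspose = (U j t).conjTranspose * U j t) ∧
    (∀ j s t, U j s * U j t = U j t * U j s) ∧
    (∀ j, U j ⟨0, hn⟩ = (((Real.sqrt n)⁻¹ : ℝ) : ℂ) • (1 : Matrix (Fin n) (Fin n) ℂ)) ∧
    (∀ j s k t, (j, s) ≠ (k, t) → ¬(s.val = 0 ∧ t.val = 0) →
      ((U j s).conjTranspose * U k t).trace = 0) := by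
  have hU' (j t) : U j t = diagonalInBasis (B j) (v t) := hU j t
  have hUstar (j t) : (U j t)ᴴ = diagonalInBasis (B j) (star (v t)) := by
    rw [hU', conjTranspose_diagonalInBasis]
  have hsum (t : Fin n) (ht : t.val ≠ 0) : ∑ i, v t i = 0 := by
    have hz : ((Real.sqrt n)⁻¹ : ℂ) ≠ 0 := by simp [hn.ne']
    refine sum_eq_zero_of_sum_mul_conj_eq_zero hz ?_
    have ht' : t ≠ ⟨0, hn⟩ := by rintro rfl; exact ht rfl
    simpa [hv1, ht'] using hv t ⟨0, hn⟩
  refine ⟨fun j t => ?_, fun j s t => ?_, fun j => ?_, fun j s k t hne hnot0 => ?_⟩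
  · rw [hUstar, hU']
    exact commute_diagonalInBasis (hONB j) _ _
  · rw [hU', hU']
    exact commute_diagonalInBasis (hONB j) _ _
  · rw [hU', show v ⟨0, hn⟩ = fun _ => _ from funext hv1, diagonalInBasis_const (hONB j)]
    push_cast
    rfl
  rw [hUstar, hU']
  by_cases hjk : j = k
  · subst hjk
    have hts : t ≠ s := fun h => hne (h ▸ rfl)
    rw [diagonalInBasis_mul (hONB j), trace_diagonalInBasis (hONB j)]
    simpa [mul_comm, hts] using hv t s
  · rw [trace_diagonalInBasis_mul_of_isMUBPair (hMUB j k hjk)]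
    rcases not_and_or.mp hnot0 with hs | ht
    · simp [← map_sum, hsum s hs]
    · simp [hsum t ht]

theorem commuting_classes_from_MUBs (n m : ℕ) (hn : 0 < n) (hm : 1 ≤ m)
    (B : Fin m → Fin n → Fin n → ℂ)
    (hONB : ∀ j, IsONB n (B j))
    (hMUB : ∀ j k, j ≠ k → IsMUBPair n (B j) (B k))
    (v : Fin n → Fin n → ℂ)
    (hv : ∀ t s : Fin n, (∑ i, v t i * conj (v s i)) = if t = s then 1 else 0)
    (hv1 : ∀ i, v ⟨0, hn⟩ i = ((Real.sqrt n)⁻¹ : ℂ))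
    (U : Fin m → Fin n → Matrix (Fin n) (Fin n) ℂ)
    (hU : ∀ j t, U j t = ∑ i, v t i • Matrix.of (fun a b => B j i a * conj (B j i b))) :
    (∀ j t, U j t * (U j t).conjTranspose = (U j t).conjTranspose * U j t) ∧
    (∀ j s t, U j s * U j t = U j t * U j s) ∧
    (∀ j, U j ⟨0, hn⟩ = (((Real.sqrt n)⁻¹ : ℝ) : ℂ) • (1 : Matrix (Fin n) (Fin n) ℂ)) ∧
    (∀ j s k t, (j, s) ≠ (k, t) → ¬(s.val = 0 ∧ t.val = 0) →
      ((U j s).conjTranspose * U k t).trace = 0) :=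
  commuting_classes_from_MUBs_general n m hn B hONB hMUB v hv hv1 U hU
end
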